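/- arXiv:2211.01699 — 4 statements merged into one kernel-verified Lean document; each statement's English description precedes it below -/
import Mathlib

section
/- Let G = (V,E) be a finite simple graph and S ⊆ V such that G∖S is bipartite and the contraction G/S is non-bipartite with odd girth 2ρ−1 (ρ ≥ 2 an integer). Let w : V → ℝ≥0 with w(V) = 2 admit a dual certificate y, and set α := y(E[S]), where E[S] is the set of edges of G with both endpoints in S. Then w(S) + OPT(G∖S, w) ≤ ((1 + 1/ρ)(1 − α) + 2α) · OPT(G, w). -/
open Finset

/-- `C` is a vertex cover of `G`. -/
def IsVC {V : Type*} (G : SimpleGraph V) (C : Finset V) : Prop :=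
  ∀ ⦃u v : V⦄, G.Adj u v → u ∈ C ∨ v ∈ C

/-- `OPT G w` : minimum weight of a vertex cover of `G`. -/
noncomputable def OPT {V : Type*} [Fintype V] (G : SimpleGraph V) (w : V → ℝ) : ℝ :=
  sInf {t : ℝ | ∃ C : Finset V, IsVC G C ∧ t = ∑ v ∈ C, w v}

/-- `LPval G w` : optimal value of the standard vertex cover LP relaxation. -/
noncomputable def LPval {V : Type*} [Fintype V] (G : SimpleGraph V) (w : V → ℝ) : ℝ :=
  sInf {t : ℝ | ∃ x : V → ℝ, (∀ v, 0 ≤ x v) ∧ (∀ ⦃u v : V⦄, G.Adj u v → 1 ≤ x u + x v) ∧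
    t = ∑ v, w v * x v}

/-- The graph `G ∖ S` (vertices of `S` kept as isolated vertices). -/
def Gdel {V : Type*} (G : SimpleGraph V) (S : Set V) : SimpleGraph V :=
  SimpleGraph.fromRel (fun u v => G.Adj u v ∧ u ∉ S ∧ v ∉ S)

open scoped Classical in
/-- Sum of `y` over the set of edges described by `P`. -/
noncomputable def ysum {V : Type*} [Fintype V] [DecidableEq V]
    (y : Sym2 V → ℝ) (P : Sym2 V → Prop) : ℝ :=
  ∑ e : Sym2 V, if P e then y e else 0

/-- `y` is a dual certificate for `w` : a feasible dual solution with `y(δ(v)) = w v`. -/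
def IsDualCert {V : Type*} [Fintype V] [DecidableEq V] (G : SimpleGraph V)
    (w : V → ℝ) (y : Sym2 V → ℝ) : Prop :=
  (∀ e, 0 ≤ y e) ∧ (∀ e, e ∉ G.edgeSet → y e = 0) ∧
    ∀ v : V, ysum y (fun e => e ∈ G.edgeSet ∧ v ∈ e) = w v

/-- Membership in the polytope `Q^W`. -/
def memQW {V : Type*} [Fintype V] [DecidableEq V] (G : SimpleGraph V) (w : V → ℝ) : Prop :=
  (∀ v, 0 ≤ w v) ∧ (∑ v, w v) = 2 ∧ ∃ y : Sym2 V → ℝ, IsDualCert G w y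

/-- `G` has odd girth `n` : it contains an odd cycle of length `n` and no shorter one. -/
def HasOddGirth {V : Type*} (G : SimpleGraph V) (n : ℕ) : Prop :=
  Odd n ∧ (∃ (v : V) (c : G.Walk v v), c.IsCycle ∧ c.length = n) ∧
    ∀ (v : V) (c : G.Walk v v), c.IsCycle → Odd c.length → n ≤ c.length

/-- The contraction `G / S` of the vertex set `S` to a single new vertex `none`. -/
def contract {V : Type*} (G : SimpleGraph V) (S : Set V) :
    SimpleGraph (Option {v : V // v ∉ S}) :=
  SimpleGraph.fromRel (fun x y =>
    match x, y with
    | some u, some v => G.Adj u.1 v.1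
    | some u, none => ∃ s ∈ S, G.Adj u.1 s
    | none, _ => False)

/-- `I` is an independent set of `G`. -/
def IsIndep {V : Type*} (G : SimpleGraph V) (I : Finset V) : Prop :=
  ∀ ⦃u⦄, u ∈ I → ∀ ⦃v⦄, v ∈ I → ¬ G.Adj u v

/-- The fractional chromatic number of `G`. -/
noncomputable def fracChrom {V : Type*} [Fintype V] [DecidableEq V] (G : SimpleGraph V) : ℝ :=
  sInf {t : ℝ | ∃ y : Finset V → ℝ, (∀ I, 0 ≤ y I) ∧ (∀ I, ¬ IsIndep G I → y I = 0) ∧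
    (∀ v : V, 1 ≤ ∑ I : Finset V, if v ∈ I then y I else 0) ∧ t = ∑ I : Finset V, y I}

/-!
Let `C` be a minimum vertex cover of `G`. Layer the vertices outside `S` by their distance to the
contracted vertex of `G / S`, and 2-colour `G ∖ S`. An edge inside layer `m` closes an odd walk of
length `2m + 1` through the contracted vertex, so only layers `m ≥ ρ - 1` contain edges. Hence for
each `k < ρ`, the odd layers below `2⌊k/2⌋ + 1` together with one colour class from there on form an
independent set `N_k` disjoint from `S`, and `V ∖ (S ∪ N_k)` covers `G ∖ S`. Every edge not inside
`S` meets all but at most one `N_k`, so weighing the edges by the dual certificate gives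
`ρ w(V) ≤ (ρ + 1) w(C) + ∑_k w(N_k) + (ρ - 1) α`. The heaviest `N_k` then yields the bound, with
`w(C) ≥ w(V) / 2 = 1` absorbing the `α` term.
-/

namespace SimpleGraph

variable {W : Type*} {H : SimpleGraph W}

theorem Walk.exists_isCycle_odd_length_le {u : W} (p : H.Walk u u) (hp : Odd p.length) :
    ∃ (x : W) (c : H.Walk x x), c.IsCycle ∧ Odd c.length ∧ c.length ≤ p.length := by
  induction hn : p.length using Nat.strong_induction_on generalizing u with
  | _ n ih =>
  cases p with
  | nil => simp at hp
  | cons h q =>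
    by_cases hq : q.IsPath
    · refine ⟨u, cons h q, ?_, hp, hn.le⟩
      refine isCycle_iff_isPath_tail_and_le_length.mpr ⟨by simpa using hq, ?_⟩
      cases q with
      | nil => exact absurd h H.irrefl
      | cons h' q' =>
        cases q' with
        | nil => norm_num at hp
        | cons => simp
    · obtain ⟨x, c, ⟨r₁, r₂, rfl⟩, hc⟩ : ∃ (x : W) (c : H.Walk x x), c.IsSubwalk q ∧ ¬ c.Nil := by
        simpa [isPath_iff_isSubwalk_imp_nil] using hq
      have hc0 := not_nil_iff_lt_length.mp hc
      simp only [length_cons, length_append] at hn hp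
      -- the walk splits into the closed walks `c` and `cons h (r₁.append r₂)`, one of them odd
      rcases Nat.even_or_odd c.length with hce | hco
      · obtain ⟨z, c', hc', hco', hle⟩ := ih (cons h (r₁.append r₂)).length
          (by simp only [length_cons, length_append]; omega) (cons h (r₁.append r₂))
          (by simp only [length_cons, length_append]; grind) rfl
        exact ⟨z, c', hc', hco', by simp only [length_cons, length_append] at hle; omega⟩
      · obtain ⟨z, c', hc', hco', hle⟩ := ih c.length (by omega) c hco rfl
        exact ⟨z, c', hc', hco', by omega⟩

open scoped Classical in
noncomputable def distOr (H : SimpleGraph W) (r : W) (n : ℕ) (x : W) : ℕ :=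
  if H.Reachable r x then H.dist r x else n

variable {r x x' : W} {n : ℕ}

theorem distOr_le_add_one (h : H.Adj x x') : H.distOr r n x' ≤ H.distOr r n x + 1 := by
  by_cases hx : H.Reachable r x
  · obtain ⟨p, hp⟩ := hx.exists_walk_length_eq_dist
    simp only [distOr, if_pos hx, if_pos (hx.trans h.reachable)]
    simpa [hp] using dist_le (p.concat h)
  · have hx' : ¬ H.Reachable r x' := fun hx' => hx (hx'.trans h.symm.reachable)
    simp [distOr, hx, hx']

theorem distOr_eq_one (h : H.Adj r x) : H.distOr r n x = 1 := by
  simp [distOr, h.reachable, dist_eq_one_iff_adj.mpr h]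

theorem le_distOr_add_one
    (hodd : ∀ (z : W) (c : H.Walk z z), c.IsCycle → Odd c.length → 2 * n - 1 ≤ c.length)
    (h : H.Adj x x') (heq : H.distOr r n x = H.distOr r n x') : n ≤ H.distOr r n x + 1 := by
  by_cases hx : H.Reachable r x
  · have hx' : H.Reachable r x' := hx.trans h.reachable
    obtain ⟨p, hp⟩ := hx.exists_walk_length_eq_dist
    obtain ⟨p', hp'⟩ := hx'.exists_walk_length_eq_dist
    simp only [distOr, if_pos hx, if_pos hx'] at heq ⊢
    have hlen : (p.append (Walk.cons h p'.reverse)).length = 2 * H.dist r x + 1 := by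
      simp only [Walk.length_append, Walk.length_cons, Walk.length_reverse, hp, hp', heq]
      omega
    obtain ⟨z, c, hc, hco, hcl⟩ :=
      (p.append (Walk.cons h p'.reverse)).exists_isCycle_odd_length_le (by rw [hlen]; simp)
    have := hodd z c hc hco
    omega
  · simp [distOr, hx]

end SimpleGraph

theorem Finset.le_card_filter_range_add_one {n : ℕ} {P : ℕ → Prop} [DecidablePred P]
    (h : ∀ k < n, ∀ k' < n, ¬ P k → ¬ P k' → k = k') : n ≤ #{k ∈ range n | P k} + 1 := by
  have hbad : #{k ∈ range n | ¬ P k} ≤ 1 := card_le_one.mpr fun k hk k' hk' => by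
    simp only [mem_filter, mem_range] at hk hk'
    exact h k hk.1 k' hk'.1 hk.2 hk'.2
  have hsum : #{k ∈ range n | P k} + #{k ∈ range n | ¬ P k} = n := by
    rw [card_filter_add_card_filter_not, card_range]
  omega

theorem Finset.sum_sum_eq_sum_card_nsmul {ι V M : Type*} [Fintype V] [DecidableEq V]
    [AddCommMonoid M] (s : Finset ι) (N : ι → Finset V) (w : V → M) :
    ∑ i ∈ s, ∑ v ∈ N i, w v = ∑ v, #{i ∈ s | v ∈ N i} • w v := by
  rw [sum_comm' (t' := univ) (s' := fun v => {i ∈ s | v ∈ N i}) (by simp)]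
  simp

section Layering

variable {V : Type*} [Fintype V] [DecidableEq V]

structure IsLayering (G : SimpleGraph V) (S : Finset V) (ρ : ℕ) (d : V → ℕ) (col : V → Fin 2) :
    Prop where
  col_ne : ∀ ⦃a b⦄, a ∉ S → b ∉ S → G.Adj a b → col a ≠ col b
  le_add_one : ∀ ⦃a b⦄, a ∉ S → b ∉ S → G.Adj a b → d b ≤ d a + 1
  le_add_one_of_eq : ∀ ⦃a b⦄, a ∉ S → b ∉ S → G.Adj a b → d a = d b → ρ ≤ d a + 1
  eq_one : ∀ ⦃s b⦄, s ∈ S → b ∉ S → G.Adj s b → d b = 1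

-- Every odd threshold `2⌊k/2⌋ + 1` is used with both colour classes, so that an edge misses at
-- most one of the candidates.
def candidate (S : Finset V) (d : V → ℕ) (col : V → Fin 2) (k : ℕ) : Finset V :=
  {v | v ∉ S ∧ (d v % 2 = 1 ∧ d v < 2 * (k / 2) + 1 ∨ 2 * (k / 2) + 1 ≤ d v ∧ (col v : ℕ) = k % 2)}

def candidateCount (S : Finset V) (d : V → ℕ) (col : V → Fin 2) (ρ : ℕ) (v : V) : ℕ :=
  #{k ∈ range ρ | v ∈ candidate S d col k}

variable {G : SimpleGraph V} {S : Finset V} {ρ : ℕ} {d : V → ℕ} {col : V → Fin 2}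

theorem disjoint_candidate (k : ℕ) : Disjoint S (candidate S d col k) :=
  disjoint_right.mpr fun _ hv => (mem_filter.mp hv).2.1

theorem IsLayering.isIndep_candidate (h : IsLayering G S ρ d col) {k : ℕ} (hk : k < ρ) :
    IsIndep G (candidate S d col k) := by
  intro a ha b hb hab
  simp only [candidate, mem_filter, mem_univ, true_and] at ha hb
  have := h.le_add_one ha.1 hb.1 hab
  have := h.le_add_one hb.1 ha.1 hab.symm
  have := h.le_add_one_of_eq ha.1 hb.1 hab
  have := Fin.val_ne_of_ne (h.col_ne ha.1 hb.1 hab)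
  omega

theorem IsLayering.le_candidateCount_add_candidateCount (h : IsLayering G S ρ d col) {a b : V}
    (hab : G.Adj a b) (hS : ¬ (a ∈ S ∧ b ∈ S)) :
    ρ ≤ candidateCount S d col ρ a + candidateCount S d col ρ b + 1 := by
  have hbad : ∀ k < ρ, ∀ k' < ρ, ¬ (a ∈ candidate S d col k ∨ b ∈ candidate S d col k) →
      ¬ (a ∈ candidate S d col k' ∨ b ∈ candidate S d col k') → k = k' := by
    intro k hk k' hk' hnk hnk'
    simp only [candidate, mem_filter, mem_univ, true_and] at hnk hnk'
    have := (col a).isLt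
    have := (col b).isLt
    by_cases ha : a ∈ S
    · have hb : b ∉ S := fun hb => hS ⟨ha, hb⟩
      have := h.eq_one ha hb hab
      simp only [ha, hb, not_true_eq_false, not_false_eq_true, false_and, true_and, false_or]
        at hnk hnk'
      omega
    by_cases hb : b ∈ S
    · have := h.eq_one hb ha hab.symm
      simp only [ha, hb, not_true_eq_false, not_false_eq_true, false_and, true_and, or_false]
        at hnk hnk'
      omega
    have := h.le_add_one ha hb hab
    have := h.le_add_one hb ha hab.symm
    have := h.le_add_one_of_eq ha hb hab
    have := Fin.val_ne_of_ne (h.col_ne ha hb hab)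
    simp only [ha, hb, not_false_eq_true, true_and] at hnk hnk'
    omega
  calc ρ ≤ #{k ∈ range ρ | a ∈ candidate S d col k ∨ b ∈ candidate S d col k} + 1 :=
        le_card_filter_range_add_one hbad
    _ ≤ candidateCount S d col ρ a + candidateCount S d col ρ b + 1 := by
        rw [filter_or]
        exact Nat.add_le_add_right (card_union_le _ _) 1

theorem exists_sum_candidateCount_mul_le (hρ : 0 < ρ) (w : V → ℝ) :
    ∃ k < ρ, ∑ v, (candidateCount S d col ρ v : ℝ) * w v ≤ ρ * ∑ v ∈ candidate S d col k, w v := by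
  obtain ⟨k, hk, h⟩ := exists_le_of_sum_le (nonempty_range_iff.mpr hρ.ne')
    (f := fun _ => ∑ v, (candidateCount S d col ρ v : ℝ) * w v)
    (g := fun k => ρ * ∑ v ∈ candidate S d col k, w v)
    (by simp [← mul_sum, candidateCount, sum_sum_eq_sum_card_nsmul])
  exact ⟨k, mem_range.mp hk, h⟩

end Layering

section VertexCover

variable {V : Type*} [Fintype V] (G : SimpleGraph V) (w : V → ℝ)

theorem finite_setOf_isVC_sum : {t : ℝ | ∃ C : Finset V, IsVC G C ∧ t = ∑ v ∈ C, w v}.Finite :=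
  (Set.finite_range fun C : Finset V => ∑ v ∈ C, w v).subset fun _ ⟨C, _, ht⟩ => ⟨C, ht.symm⟩

theorem OPT_le_sum {C : Finset V} (hC : IsVC G C) : OPT G w ≤ ∑ v ∈ C, w v :=
  csInf_le (finite_setOf_isVC_sum G w).bddBelow ⟨C, hC, rfl⟩

theorem exists_isVC_sum_eq_OPT : ∃ C : Finset V, IsVC G C ∧ ∑ v ∈ C, w v = OPT G w := by
  have hne : {t : ℝ | ∃ C : Finset V, IsVC G C ∧ t = ∑ v ∈ C, w v}.Nonempty :=
    ⟨_, univ, fun u _ _ => Or.inl (mem_univ u), rfl⟩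
  obtain ⟨C, hC, h⟩ := hne.csInf_mem (finite_setOf_isVC_sum G w)
  exact ⟨C, hC, h.symm⟩

variable [DecidableEq V]

variable {G} in
theorem isVC_Gdel_compl {S N : Finset V} (hN : IsIndep G N) : IsVC (Gdel G ↑S) (S ∪ N)ᶜ := by
  suffices ∀ ⦃a b⦄, G.Adj a b → a ∉ S → b ∉ S → a ∈ (S ∪ N)ᶜ ∨ b ∈ (S ∪ N)ᶜ by
    intro a b hab
    obtain ⟨-, ⟨hab, ha, hb⟩ | ⟨hab, hb, ha⟩⟩ := (SimpleGraph.fromRel_adj _ _ _).mp hab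
    · exact this hab ha hb
    · exact (this hab hb ha).symm
  intro a b hab ha hb
  by_contra! h
  simp only [mem_compl, mem_union, not_not, ha, hb, false_or] at h
  exact hN h.1 h.2 hab

theorem sum_add_OPT_Gdel_add_sum_le {S N : Finset V} (hN : IsIndep G N) (hSN : Disjoint S N) :
    ∑ v ∈ S, w v + OPT (Gdel G ↑S) w + ∑ v ∈ N, w v ≤ ∑ v, w v := by
  have hOPT := OPT_le_sum (Gdel G ↑S) w (isVC_Gdel_compl hN)
  have hsplit := sum_compl_add_sum (S ∪ N) w
  rw [sum_union hSN] at hsplit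
  linarith

end VertexCover

section DualCertificate

variable {V : Type*} [Fintype V] [DecidableEq V] {G : SimpleGraph V} {w : V → ℝ}
  {y : Sym2 V → ℝ}

theorem IsDualCert.sum_mul_eq (hdc : IsDualCert G w y) (f : V → ℝ) :
    ∑ v, f v * w v = ∑ e, y e * ∑ v ∈ e.toFinset, f v := by
  have hw : ∀ v, w v = ∑ e, if v ∈ e.toFinset then y e else 0 := fun v => by
    rw [← hdc.2.2 v, ysum]
    refine sum_congr rfl fun e _ => ?_
    by_cases he : e ∈ G.edgeSet
    · simp [he]
    · simp [he, hdc.2.1 e he]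
  calc ∑ v, f v * w v = ∑ v, ∑ e, if v ∈ e.toFinset then y e * f v else 0 := by
        simp_rw [hw, mul_sum, mul_ite, mul_zero, mul_comm]
    _ = ∑ e, y e * ∑ v ∈ e.toFinset, f v := by
        rw [sum_comm]
        simp_rw [sum_ite_mem, univ_inter, mul_sum]

theorem IsDualCert.sum_mul_le (hdc : IsDualCert G w y) {f : V → ℝ} {P : Sym2 V → Prop}
    [DecidablePred P] {c : ℝ} (hf : ∀ a b, G.Adj a b → f a + f b ≤ if P s(a, b) then c else 0) :
    ∑ v, f v * w v ≤ c * ysum y (fun e => e ∈ G.edgeSet ∧ P e) := by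
  rw [hdc.sum_mul_eq, ysum, mul_sum]
  refine sum_le_sum fun e _ => ?_
  by_cases he : e ∈ G.edgeSet
  · induction e using Sym2.ind with
    | _ a b =>
      have hab : G.Adj a b := he
      have := mul_le_mul_of_nonneg_left (hf a b hab) (hdc.1 s(a, b))
      rw [Sym2.toFinset_mk_eq, sum_pair hab.ne]
      split_ifs at this ⊢ <;> simp_all [mul_comm]
  · simp [hdc.2.1 e he, he]

theorem IsDualCert.ysum_nonneg (hdc : IsDualCert G w y) (P : Sym2 V → Prop) : 0 ≤ ysum y P :=
  sum_nonneg fun e _ => by split_ifs; exacts [hdc.1 e, le_rfl]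

theorem IsDualCert.sum_le_two_mul (hdc : IsDualCert G w y) {C : Finset V} (hC : IsVC G C) :
    ∑ v, w v ≤ 2 * ∑ v ∈ C, w v := by
  have := hdc.sum_mul_le (f := fun v => 1 - 2 * if v ∈ C then 1 else 0) (P := fun _ => False)
    (c := 0) fun a b hab => by rcases hC hab with h | h <;> split_ifs <;> norm_num
  simp only [mul_ite, mul_one, mul_zero, sub_mul, one_mul, ite_mul, zero_mul, sum_sub_distrib,
    sum_ite_mem, univ_inter, tsub_le_iff_right, zero_add] at this
  rwa [mul_sum]

theorem IsLayering.mul_sum_le {S : Finset V} {ρ : ℕ} {d : V → ℕ} {col : V → Fin 2}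
    (hL : IsLayering G S ρ d col) (hdc : IsDualCert G w y) {C : Finset V} (hC : IsVC G C) :
    ρ * ∑ v, w v ≤ (ρ + 1) * ∑ v ∈ C, w v + ∑ v, (candidateCount S d col ρ v : ℝ) * w v
      + (ρ - 1) * ysum y (fun e => e ∈ G.edgeSet ∧ ∃ p ∈ S, ∃ q ∈ S, e = s(p, q)) := by
  classical
  have := hdc.sum_mul_le (c := ρ - 1) (P := fun e => ∃ p ∈ S, ∃ q ∈ S, e = s(p, q))
    (f := fun v => ρ - (if v ∈ C then (ρ : ℝ) + 1 else 0) - candidateCount S d col ρ v) ?_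
  · simp only [sub_mul, sum_sub_distrib, ite_mul, zero_mul, sum_ite_mem, univ_inter] at this
    simp only [mul_sum] at this ⊢
    linarith
  intro a b hab
  have hρ : (0 : ℝ) ≤ ρ := by positivity
  have hcover :
      (ρ + 1 : ℝ) ≤ (if a ∈ C then (ρ : ℝ) + 1 else 0) + (if b ∈ C then (ρ : ℝ) + 1 else 0) := by
    rcases hC hab with h | h <;> split_ifs <;> linarith
  by_cases hP : ∃ p ∈ S, ∃ q ∈ S, s(a, b) = s(p, q)
  · rw [if_pos hP]
    have := (candidateCount S d col ρ a).cast_nonneg (α := ℝ)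
    have := (candidateCount S d col ρ b).cast_nonneg (α := ℝ)
    linarith
  · rw [if_neg hP]
    have := hL.le_candidateCount_add_candidateCount hab fun ⟨ha, hb⟩ => hP ⟨a, ha, b, hb, rfl⟩
    have : (ρ : ℝ) ≤ candidateCount S d col ρ a + candidateCount S d col ρ b + 1 := by
      exact_mod_cast this
    linarith

end DualCertificate

section Contraction

variable {V : Type*} {G : SimpleGraph V} {S : Finset V} {ρ : ℕ}

theorem contract_adj_some {a b : V} (ha : a ∉ S) (hb : b ∉ S) (h : G.Adj a b) :
    (contract G ↑S).Adj (some ⟨a, ha⟩) (some ⟨b, hb⟩) :=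
  (SimpleGraph.fromRel_adj _ _ _).mpr ⟨by simpa using h.ne, Or.inl h⟩

theorem contract_adj_none {s b : V} (hs : s ∈ S) (hb : b ∉ S) (h : G.Adj s b) :
    (contract G ↑S).Adj none (some ⟨b, hb⟩) :=
  (SimpleGraph.fromRel_adj _ _ _).mpr ⟨by simp, Or.inr ⟨s, hs, h.symm⟩⟩

variable [DecidableEq V]

noncomputable def contractLayer (G : SimpleGraph V) (S : Finset V) (ρ : ℕ) (v : V) : ℕ :=
  if h : v ∈ S then 0 else (contract G ↑S).distOr none ρ (some ⟨v, h⟩)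

theorem contractLayer_of_notMem {v : V} (h : v ∉ S) :
    contractLayer G S ρ v = (contract G ↑S).distOr none ρ (some ⟨v, h⟩) :=
  dif_neg h

theorem isLayering_contractLayer (c : (Gdel G ↑S).Coloring (Fin 2))
    (hog : HasOddGirth (contract G ↑S) (2 * ρ - 1)) :
    IsLayering G S ρ (contractLayer G S ρ) c where
  col_ne a b ha hb h := c.valid ((SimpleGraph.fromRel_adj _ _ _).mpr ⟨h.ne, Or.inl ⟨h, ha, hb⟩⟩)
  le_add_one a b ha hb h := by
    simpa only [contractLayer_of_notMem ha, contractLayer_of_notMem hb] using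
      SimpleGraph.distOr_le_add_one (contract_adj_some ha hb h)
  le_add_one_of_eq a b ha hb h := by
    simpa only [contractLayer_of_notMem ha, contractLayer_of_notMem hb] using
      SimpleGraph.le_distOr_add_one hog.2.2 (contract_adj_some ha hb h)
  eq_one s b hs hb h := by
    rw [contractLayer_of_notMem hb]
    exact SimpleGraph.distOr_eq_one (contract_adj_none hs hb h)

end Contraction

theorem round_bipartize_arbitrary_set_general {V : Type*} [Fintype V] [DecidableEq V]
    (G : SimpleGraph V) (S : Finset V)
    (hbip : (Gdel G ↑S).Colorable 2)
    (ρ : ℕ) (hρ : 2 ≤ ρ) (hog : HasOddGirth (contract G ↑S) (2 * ρ - 1))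
    (w : V → ℝ) (hw2 : ∑ v, w v = 2)
    (y : Sym2 V → ℝ) (hdc : IsDualCert G w y)
    (α : ℝ)
    (hα : α = ysum y (fun e => e ∈ G.edgeSet ∧ ∃ p ∈ S, ∃ q ∈ S, e = s(p, q))) :
    ∑ v ∈ S, w v + OPT (Gdel G ↑S) w ≤
      ((1 + 1 / (ρ : ℝ)) * (1 - α) + 2 * α) * OPT G w := by
  obtain ⟨c⟩ := hbip
  have hL := isLayering_contractLayer c hog
  obtain ⟨C, hC, hCopt⟩ := exists_isVC_sum_eq_OPT G w
  obtain ⟨k, hk, hNk⟩ := exists_sum_candidateCount_mul_le (S := S) (d := contractLayer G S ρ)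
    (col := c) (by omega : 0 < ρ) w
  have hz := sum_add_OPT_Gdel_add_sum_le G w (hL.isIndep_candidate hk) (disjoint_candidate k)
  have hkey := hL.mul_sum_le hdc hC
  have hα0 : 0 ≤ α := hα ▸ hdc.ysum_nonneg _
  rw [← hα, hw2] at hkey
  rw [hw2] at hz
  have hT : 1 ≤ ∑ v ∈ C, w v := by linarith [hdc.sum_le_two_mul hC]
  have hρ1 : (1 : ℝ) ≤ ρ := by exact_mod_cast (by omega : 1 ≤ ρ)
  have hρ0 : (0 : ℝ) < ρ := by linarith
  rw [← hCopt]
  refine le_of_mul_le_mul_left ?_ hρ0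
  calc (ρ : ℝ) * (∑ v ∈ S, w v + OPT (Gdel G ↑S) w)
      ≤ ρ * (2 - ∑ v ∈ candidate S (contractLayer G S ρ) c k, w v) := by gcongr; linarith
    _ ≤ (ρ + 1) * ∑ v ∈ C, w v + (ρ - 1) * α := by linarith
    _ ≤ (ρ + 1 + (ρ - 1) * α) * ∑ v ∈ C, w v := by
        nlinarith [mul_nonneg (mul_nonneg (sub_nonneg.mpr hρ1) hα0) (sub_nonneg.mpr hT)]
    _ = ρ * (((1 + 1 / ρ) * (1 - α) + 2 * α) * ∑ v ∈ C, w v) := by field_simp; ring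

/-- for an arbitrary bipartizing set `S` with non-bipartite contraction of
odd girth `2ρ-1`, the round-and-bipartize value is at most
`((1 + 1/ρ)(1-α) + 2α) · OPT(G,w)`, where `α = y(E[S])`. -/
theorem round_bipartize_arbitrary_set {V : Type*} [Fintype V] [DecidableEq V]
    (G : SimpleGraph V) (S : Finset V)
    (hbip : (Gdel G ↑S).Colorable 2) (hnb : ¬ (contract G ↑S).Colorable 2)
    (ρ : ℕ) (hρ : 2 ≤ ρ) (hog : HasOddGirth (contract G ↑S) (2 * ρ - 1))
    (w : V → ℝ) (hw0 : ∀ v, 0 ≤ w v) (hw2 : ∑ v, w v = 2)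
    (y : Sym2 V → ℝ) (hdc : IsDualCert G w y)
    (α : ℝ)
    (hα : α = ysum y (fun e => e ∈ G.edgeSet ∧ ∃ p ∈ S, ∃ q ∈ S, e = s(p, q))) :
    ∑ v ∈ S, w v + OPT (Gdel G ↑S) w ≤
      ((1 + 1 / (ρ : ℝ)) * (1 - α) + 2 * α) * OPT G w :=
  round_bipartize_arbitrary_set_general G S hbip ρ hρ hog w hw2 y hdc α hα
end

section
/- For every real α ∈ [0,1], there exist a finite non-bipartite simple graph G = (V,E), a set S ⊆ V such that G∖S is bipartite and the contraction G/S is bipartite, a weight function w : V → ℝ≥0 with w(V) = 2, and a dual certificate y for w with y(E[S]) = α (E[S] the edges inside S), such that w(S) + OPT(G∖S, w) = (1 + α) · OPT(G, w). -/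
open Finset

/-! The witness is a triangle on `S = {0, 1, 2}` plus a disjoint edge `{3, 4}`, with weights
`α, α, 0` on the triangle and `1 - α` at both ends of the edge, certified by `y = α` on `{0, 1}`
and `y = 1 - α` on `{3, 4}`. Both optima follow from weak LP duality: a vertex cover meets every
edge, so its weight dominates the total of any nonnegative `y` with `y(δ(v)) ≤ w v`. Hence
`OPT(G) = 1` (the cover `{0, 2, 3}`) and `OPT(G ∖ S) = 1 - α` (the cover `{3}`), while
`w(S) = 2α`. As `S` is a union of components, the contracted vertex of `G / S` is isolated and
`G / S` maps homomorphically to the bipartite graph `G ∖ S`. -/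

theorem IsVC.exists_mem_of_mem_edgeSet {V : Type*} {G : SimpleGraph V} {C : Finset V}
    (hC : IsVC G C) {e : Sym2 V} (he : e ∈ G.edgeSet) : ∃ v ∈ C, v ∈ e := by
  induction e using Sym2.ind with
  | h u v =>
    rcases hC he with hu | hv
    · exact ⟨u, hu, Sym2.mem_mk_left u v⟩
    · exact ⟨v, hv, Sym2.mem_mk_right u v⟩

section Ysum

variable {V : Type*} [Fintype V] [DecidableEq V]

theorem ysum_add (y₁ y₂ : Sym2 V → ℝ) (P : Sym2 V → Prop) :
    ysum (y₁ + y₂) P = ysum y₁ P + ysum y₂ P := by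
  simp only [ysum, Pi.add_apply, ← Finset.sum_add_distrib, ite_add_zero]

open scoped Classical in
theorem ysum_single (f : Sym2 V) (c : ℝ) (P : Sym2 V → Prop) :
    ysum (Pi.single f c) P = if P f then c else 0 := by
  simp only [ysum, Pi.single_apply]
  rw [Finset.sum_eq_single f (fun e _ he => by simp [he]) (by simp)]
  simp

variable {G : SimpleGraph V} {w : V → ℝ} {y : Sym2 V → ℝ}

theorem ysum_edgeSet_le_sum_of_isVC (hy : ∀ e, 0 ≤ y e)
    (hyw : ∀ v, ysum y (fun e => e ∈ G.edgeSet ∧ v ∈ e) ≤ w v) {C : Finset V} (hC : IsVC G C) :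
    ysum y (· ∈ G.edgeSet) ≤ ∑ v ∈ C, w v := by
  classical
  calc ysum y (· ∈ G.edgeSet)
      ≤ ∑ v ∈ C, ysum y (fun e => e ∈ G.edgeSet ∧ v ∈ e) := by
        unfold ysum
        rw [Finset.sum_comm]
        refine Finset.sum_le_sum fun e _ => ?_
        by_cases he : e ∈ G.edgeSet
        · obtain ⟨v, hvC, hve⟩ := hC.exists_mem_of_mem_edgeSet he
          simp only [he, true_and, if_true]
          convert Finset.single_le_sum (f := fun v => if v ∈ e then y e else 0)
            (fun _ _ => ite_nonneg (hy e) le_rfl) hvC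
          simp [hve]
        · simp only [he, false_and, if_false]
          exact Finset.sum_nonneg fun _ _ => le_rfl
    _ ≤ ∑ v ∈ C, w v := Finset.sum_le_sum fun v _ => hyw v

theorem OPT_eq_of_isVC_of_ysum_eq (hy : ∀ e, 0 ≤ y e)
    (hyw : ∀ v, ysum y (fun e => e ∈ G.edgeSet ∧ v ∈ e) ≤ w v) {C : Finset V} (hC : IsVC G C)
    (hCy : ∑ v ∈ C, w v = ysum y (· ∈ G.edgeSet)) : OPT G w = ∑ v ∈ C, w v := by
  have hlb : ∀ t ∈ {t : ℝ | ∃ D : Finset V, IsVC G D ∧ t = ∑ v ∈ D, w v}, ∑ v ∈ C, w v ≤ t := by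
    rintro t ⟨D, hD, rfl⟩
    exact hCy ▸ ysum_edgeSet_le_sum_of_isVC hy hyw hD
  exact le_antisymm (csInf_le ⟨_, hlb⟩ ⟨C, hC, rfl⟩) (le_csInf ⟨_, C, hC, rfl⟩ hlb)

end Ysum

theorem contract_colorable_of_adj_closed {V : Type*} {G : SimpleGraph V} {S : Set V}
    (hS : ∀ ⦃u v⦄, G.Adj u v → u ∈ S → v ∈ S) (v₀ : V) {n : ℕ}
    (h : (Gdel G S).Colorable n) : (contract G S).Colorable n := by
  refine h.of_hom ⟨fun x => x.elim v₀ Subtype.val, ?_⟩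
  rintro (_ | ⟨u, hu⟩) (_ | ⟨v, hv⟩) hadj <;>
    simp only [contract, SimpleGraph.fromRel_adj, or_false, false_or] at hadj
  · exact absurd rfl hadj.1
  · obtain ⟨s, hs, hvs⟩ := hadj.2
    exact absurd (hS hvs.symm hs) hv
  · obtain ⟨s, hs, hus⟩ := hadj.2
    exact absurd (hS hus.symm hs) hu
  · have huv : G.Adj u v := hadj.2.elim id fun h => h.symm
    simp only [Option.elim, Gdel, SimpleGraph.fromRel_adj]
    exact ⟨huv.ne, Or.inl ⟨huv, hu, hv⟩⟩

instance {V : Type*} [DecidableEq V] (G : SimpleGraph V) [DecidableRel G.Adj] (S : Finset V) :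
    DecidableRel (Gdel G S).Adj :=
  inferInstanceAs (DecidableRel (SimpleGraph.fromRel _).Adj)

def triangleEdge : SimpleGraph (Fin 5) := SimpleGraph.fromRel fun u v => (u < 3 ↔ v < 3)

instance : DecidableRel triangleEdge.Adj :=
  inferInstanceAs (DecidableRel (SimpleGraph.fromRel _).Adj)

def triangle : Finset (Fin 5) := {0, 1, 2}

noncomputable def tightWeight (α : ℝ) : Fin 5 → ℝ := ![α, α, 0, 1 - α, 1 - α]

noncomputable def tightDual (α : ℝ) : Sym2 (Fin 5) → ℝ :=
  Pi.single s(0, 1) α + Pi.single s(3, 4) (1 - α)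

theorem triangleEdge_not_colorable : ¬ triangleEdge.Colorable 2 := fun h =>
  (SimpleGraph.is3Clique_triple_iff (a := 0) (b := 1) (c := 2)).2 (by decide) |>.not_cliqueFree
    (h.cliqueFree (by norm_num))

theorem triangleEdge_gdel_colorable : (Gdel triangleEdge ↑triangle).Colorable 2 :=
  ⟨SimpleGraph.Coloring.mk (fun v => if v = 3 then 0 else 1) (by decide)⟩

theorem triangleEdge_contract_colorable : (contract triangleEdge ↑triangle).Colorable 2 :=
  contract_colorable_of_adj_closed (by simp only [Finset.mem_coe]; decide) 0
    triangleEdge_gdel_colorable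

theorem tightWeight_nonneg {α : ℝ} (h0 : 0 ≤ α) (h1 : α ≤ 1) (v : Fin 5) : 0 ≤ tightWeight α v := by
  fin_cases v <;> simp [tightWeight, h0, h1]

theorem isDualCert_tightDual {α : ℝ} (h0 : 0 ≤ α) (h1 : α ≤ 1) :
    IsDualCert triangleEdge (tightWeight α) (tightDual α) := by
  refine ⟨fun e => ?_, fun e he => ?_, fun v => ?_⟩
  · simp only [tightDual, Pi.add_apply, Pi.single_apply]
    split_ifs <;> linarith
  · have h01 : e ≠ s(0, 1) := by rintro rfl; exact he (by decide)
    have h34 : e ≠ s(3, 4) := by rintro rfl; exact he (by decide)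
    simp [tightDual, h01, h34]
  · rw [tightDual, ysum_add, ysum_single, ysum_single]
    fin_cases v <;> simp +decide [tightWeight]

theorem OPT_triangleEdge {α : ℝ} (h0 : 0 ≤ α) (h1 : α ≤ 1) :
    OPT triangleEdge (tightWeight α) = 1 := by
  have hy := isDualCert_tightDual h0 h1
  rw [OPT_eq_of_isVC_of_ysum_eq (C := {0, 2, 3}) hy.1 (fun v => (hy.2.2 v).le)
    (by unfold IsVC; decide)]
  · simp [tightWeight]
  · rw [tightDual, ysum_add, ysum_single, ysum_single]
    simp +decide [tightWeight]

theorem OPT_gdel_triangleEdge {α : ℝ} (h0 : 0 ≤ α) (h1 : α ≤ 1) :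
    OPT (Gdel triangleEdge ↑triangle) (tightWeight α) = 1 - α := by
  have hy (e : Sym2 (Fin 5)) : 0 ≤ (Pi.single s(3, 4) (1 - α) : Sym2 (Fin 5) → ℝ) e := by
    simp only [Pi.single_apply]
    split_ifs <;> linarith
  have hyw (v : Fin 5) : ysum (Pi.single s(3, 4) (1 - α))
      (fun e => e ∈ (Gdel triangleEdge ↑triangle).edgeSet ∧ v ∈ e) ≤ tightWeight α v := by
    rw [ysum_single]
    fin_cases v <;> simp +decide [tightWeight, h0]
  rw [OPT_eq_of_isVC_of_ysum_eq (C := {3}) hy hyw (by unfold IsVC; decide)]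
  · simp [tightWeight]
  · rw [ysum_single]
    simp +decide [tightWeight]

/-- for every `α ∈ [0,1]` the bound `1 + α` is attained by some
non-bipartite graph with a bipartizing set whose contraction is bipartite. -/
theorem round_bipartize_bipartite_contraction_tight (α : ℝ) (h0 : 0 ≤ α) (h1 : α ≤ 1) :
    ∃ (n : ℕ) (G : SimpleGraph (Fin n)) (S : Finset (Fin n))
      (w : Fin n → ℝ) (y : Sym2 (Fin n) → ℝ),
      (¬ G.Colorable 2) ∧ (Gdel G ↑S).Colorable 2 ∧ (contract G ↑S).Colorable 2 ∧
      (∀ v, 0 ≤ w v) ∧ (∑ v, w v) = 2 ∧ IsDualCert G w y ∧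
      ysum y (fun e => e ∈ G.edgeSet ∧ ∃ p ∈ S, ∃ q ∈ S, e = s(p, q)) = α ∧
      ∑ v ∈ S, w v + OPT (Gdel G ↑S) w = (1 + α) * OPT G w := by
  refine ⟨5, triangleEdge, triangle, tightWeight α, tightDual α, triangleEdge_not_colorable,
    triangleEdge_gdel_colorable, triangleEdge_contract_colorable, tightWeight_nonneg h0 h1, ?_,
    isDualCert_tightDual h0 h1, ?_, ?_⟩
  · simp only [Fin.sum_univ_five, tightWeight, Matrix.cons_val]
    ring
  · rw [tightDual, ysum_add, ysum_single, ysum_single]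
    simp +decide
  · have hS : ∑ v ∈ triangle, tightWeight α v = 2 * α := by
      simp [triangle, tightWeight, two_mul]
    rw [hS, OPT_triangleEdge h0 h1, OPT_gdel_triangleEdge h0 h1]
    ring
end

section
/- Let k ≥ 4 be an integer and let G = (V,E) be a finite simple graph with a proper k-coloring whose color classes V₁, …, V_k satisfy w(V₁) ≤ w(V₂) ≤ … ≤ w(V_k), where w ∈ Q^W. Set S := V₁ ∪ … ∪ V_{k−2}. Then G∖S is bipartite and w(S) + OPT(G∖S, w) ≤ (2 − 2/k) · OPT(G, w). -/
open Finset

section aux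
open scoped Classical
variable {V : Type*} [Fintype V] [DecidableEq V]

lemma ysum_eq (y : Sym2 V → ℝ) (P : Sym2 V → Prop) {inst : ∀ e, Decidable (P e)} :
    ysum y P = ∑ e : Sym2 V, if P e then y e else 0 := by
  rw [ysum]
  exact Finset.sum_congr rfl fun e _ => by split_ifs with h <;> rfl

lemma edge_mem_sum (G : SimpleGraph V) (e : Sym2 V) (he : e ∈ G.edgeSet) (c : ℝ) :
    ∑ v : V, (if v ∈ e then c else 0) = 2 * c := by
  induction e with
  | _ a b =>
    have hadj : G.Adj a b := he
    have hab : a ≠ b := hadj.ne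
    have key : ∀ v : V, (if v ∈ s(a,b) then c else 0)
        = (if v = a then c else 0) + (if v = b then c else 0) := by
      intro v
      simp only [Sym2.mem_iff]
      by_cases ha : v = a <;> by_cases hb : v = b
      · exact absurd (ha ▸ hb) hab
      · simp [ha, hb, hab, Ne.symm hab]
      · simp [ha, hb, hab, Ne.symm hab]
      · simp [ha, hb, hab, Ne.symm hab]
    simp only [key, Finset.sum_add_distrib, Finset.sum_ite_eq', Finset.mem_univ, if_true]
    ring

lemma dual_total (G : SimpleGraph V) (w : V → ℝ) (y : Sym2 V → ℝ)
    (hy : IsDualCert G w y) (hwsum : ∑ v, w v = 2) :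
    ∑ e : Sym2 V, (if e ∈ G.edgeSet then y e else 0) = 1 := by
  obtain ⟨hy0, hyE, hyd⟩ := hy
  have h2 : ∑ v : V, ∑ e : Sym2 V, (if e ∈ G.edgeSet ∧ v ∈ e then y e else 0) = 2 := by
    rw [← hwsum]
    refine Finset.sum_congr rfl fun v _ => ?_
    rw [← hyd v]
    exact (ysum_eq y _).symm
  rw [Finset.sum_comm] at h2
  have hE : ∀ e ∈ (Finset.univ : Finset (Sym2 V)),
      ∑ v : V, (if e ∈ G.edgeSet ∧ v ∈ e then y e else 0)
      = 2 * (if e ∈ G.edgeSet then y e else 0) := by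
    intro e _
    by_cases he : e ∈ G.edgeSet
    · rw [if_pos he]
      rw [show (∑ v : V, if e ∈ G.edgeSet ∧ v ∈ e then y e else 0)
          = ∑ v : V, (if v ∈ e then y e else 0) from
        Finset.sum_congr rfl fun v _ => if_congr (by simp [he]) rfl rfl]
      exact edge_mem_sum G e he (y e)
    · simp [he]
  rw [Finset.sum_congr rfl hE, ← Finset.mul_sum] at h2
  linarith

lemma vc_weight_ge_one (G : SimpleGraph V) (w : V → ℝ) (y : Sym2 V → ℝ)
    (hy : IsDualCert G w y) (hwsum : ∑ v, w v = 2)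
    (C : Finset V) (hC : IsVC G C) : 1 ≤ ∑ v ∈ C, w v := by
  obtain ⟨hy0, hyE, hyd⟩ := hy
  have hw : ∑ v ∈ C, w v
      = ∑ e : Sym2 V, ∑ v ∈ C, (if e ∈ G.edgeSet ∧ v ∈ e then y e else 0) := by
    rw [Finset.sum_comm]
    refine Finset.sum_congr rfl fun v _ => ?_
    rw [← hyd v]
    exact ysum_eq y _
  rw [hw, ← dual_total G w y ⟨hy0, hyE, hyd⟩ hwsum]
  refine Finset.sum_le_sum fun e _ => ?_
  by_cases he : e ∈ G.edgeSet
  · obtain ⟨u, huC, hue⟩ : ∃ u, u ∈ C ∧ u ∈ e := by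
      induction e with
      | _ a b =>
        rcases hC (he : G.Adj a b) with h | h
        exacts [⟨a, h, by simp⟩, ⟨b, h, by simp⟩]
    refine le_trans ?_ (Finset.single_le_sum (fun v _ => ?_) huC)
    · simp [he, hue]
    · split_ifs with h
      exacts [hy0 _, le_rfl]
  · simp [he]

end aux

/-- for a `k`-colorable graph (`k ≥ 4`) with color classes ordered by
weight, removing all but the two heaviest classes bipartizes the graph and yields a
`(2 - 2/k)`-approximation. -/
theorem round_bipartize_k_colorable {V : Type*} [Fintype V] [DecidableEq V]
    (G : SimpleGraph V) (k : ℕ) (hk : 4 ≤ k)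
    (Vc : Fin k → Finset V)
    (hcover : ∀ v : V, ∃! i : Fin k, v ∈ Vc i)
    (hind : ∀ i, IsIndep G (Vc i))
    (w : V → ℝ) (hw : memQW G w)
    (hmono : ∀ i j : Fin k, i ≤ j → ∑ v ∈ Vc i, w v ≤ ∑ v ∈ Vc j, w v)
    (S : Finset V)
    (hS : S = (Finset.univ.filter (fun i : Fin k => (i : ℕ) < k - 2)).biUnion Vc) :
    (Gdel G ↑S).Colorable 2 ∧
      ∑ v ∈ S, w v + OPT (Gdel G ↑S) w ≤ (2 - 2 / (k : ℝ)) * OPT G w := by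
  classical
  obtain ⟨hw0, hwsum, y, hy⟩ := hw
  have hkR : (0:ℝ) < k := by exact_mod_cast Nat.lt_of_lt_of_le (by norm_num) hk
  have hk4 : (4:ℝ) ≤ k := by exact_mod_cast hk
  have h2k : k - 2 < k := by omega
  have h1k : k - 1 < k := by omega
  set i1 : Fin k := ⟨k - 2, h2k⟩ with hi1
  set i2 : Fin k := ⟨k - 1, h1k⟩ with hi2
  have hv1 : (i1 : ℕ) = k - 2 := rfl
  have hv2 : (i2 : ℕ) = k - 1 := rfl
  have hne12 : i1 ≠ i2 := by
    intro h
    have h' : (i1 : ℕ) = (i2 : ℕ) := congrArg Fin.val h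
    rw [hv1, hv2] at h'
    omega
  have hclass : ∀ v : V, v ∉ S → (v ∈ Vc i1 ∨ v ∈ Vc i2) := by
    intro v hv
    obtain ⟨i, hi, -⟩ := hcover v
    have hnot : ¬ (i : ℕ) < k - 2 := by
      intro hlt
      exact hv (hS ▸ Finset.mem_biUnion.2
        ⟨i, Finset.mem_filter.2 ⟨Finset.mem_univ _, hlt⟩, hi⟩)
    have hik := i.isLt
    rcases Nat.lt_or_ge (i : ℕ) (k - 1) with h' | h'
    · left
      have : i = i1 := by apply Fin.ext; rw [hv1]; omega
      exact this ▸ hi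
    · right
      have : i = i2 := by apply Fin.ext; rw [hv2]; omega
      exact this ▸ hi
  have hGdel : ∀ u v : V, (Gdel G ↑S).Adj u v → G.Adj u v ∧ u ∉ S ∧ v ∉ S := by
    intro u v huv
    rw [Gdel, SimpleGraph.fromRel_adj] at huv
    obtain ⟨hne, h | h⟩ := huv
    · exact ⟨h.1, fun hu => h.2.1 (Finset.mem_coe.2 hu),
        fun hvv => h.2.2 (Finset.mem_coe.2 hvv)⟩
    · exact ⟨h.1.symm, fun hu => h.2.2 (Finset.mem_coe.2 hu),
        fun hvv => h.2.1 (Finset.mem_coe.2 hvv)⟩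
  have hcol : (Gdel G ↑S).Colorable 2 := by
    refine ⟨SimpleGraph.Coloring.mk (fun v => if v ∈ Vc i2 then 0 else 1) ?_⟩
    intro u v huv
    obtain ⟨hadj, hu, hv⟩ := hGdel u v huv
    by_cases h2u : u ∈ Vc i2
    · by_cases h2v : v ∈ Vc i2
      · exact absurd hadj (hind i2 h2u h2v)
      · simp [h2u, h2v]
    · by_cases h2v : v ∈ Vc i2
      · simp [h2u, h2v]
      · have hu1 : u ∈ Vc i1 := (hclass u hu).resolve_right h2u
        have hv1' : v ∈ Vc i1 := (hclass v hv).resolve_right h2v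
        exact absurd hadj (hind i1 hu1 hv1')
  have hVC1 : IsVC (Gdel G ↑S) (Vc i1) := by
    intro u v huv
    obtain ⟨hadj, hu, hv⟩ := hGdel u v huv
    rcases hclass u hu with h | h
    · exact Or.inl h
    · rcases hclass v hv with h' | h'
      · exact Or.inr h'
      · exact absurd hadj (hind i2 h h')
  have hdisj : ∀ i j : Fin k, i ≠ j → Disjoint (Vc i) (Vc j) := by
    intro i j hij
    refine Finset.disjoint_left.2 fun v hvi hvj => hij ?_
    obtain ⟨i0, hi0, huniq⟩ := hcover v
    rw [huniq i hvi, huniq j hvj]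
  have huniv : ∀ v : V, ∃ i, v ∈ Vc i := fun v =>
    ⟨(hcover v).choose, (hcover v).choose_spec.1⟩
  have hbU : (Finset.univ.biUnion Vc) = (Finset.univ : Finset V) := by
    ext v
    simp only [Finset.mem_biUnion, Finset.mem_univ, true_and, iff_true]
    exact huniv v
  have htot : ∑ i : Fin k, ∑ v ∈ Vc i, w v = 2 := by
    rw [← Finset.sum_biUnion (fun i _ j _ hij => hdisj i j hij), hbU, hwsum]
  have hwS : ∑ v ∈ S, w v
      = ∑ i ∈ Finset.univ.filter (fun i : Fin k => (i : ℕ) < k - 2), ∑ v ∈ Vc i, w v := by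
    rw [hS, Finset.sum_biUnion (fun i _ j _ hij => hdisj i j hij)]
  have hfeq : Finset.univ.filter (fun i : Fin k => ¬ (i : ℕ) < k - 2) = {i1, i2} := by
    ext i
    simp only [Finset.mem_filter, Finset.mem_univ, true_and, Finset.mem_insert,
      Finset.mem_singleton]
    constructor
    · intro h
      have hik := i.isLt
      rcases Nat.lt_or_ge (i : ℕ) (k - 1) with h' | h'
      · left; apply Fin.ext; rw [hv1]; omega
      · right; apply Fin.ext; rw [hv2]; omega
    · rintro (rfl | rfl)
      · rw [hv1]; omega
      · rw [hv2]; omega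
  have key : ∑ v ∈ S, w v + (∑ v ∈ Vc i1, w v + ∑ v ∈ Vc i2, w v) = 2 := by
    have h := Finset.sum_filter_add_sum_filter_not Finset.univ
      (fun i : Fin k => (i : ℕ) < k - 2) (fun i => ∑ v ∈ Vc i, w v)
    rw [hfeq, Finset.sum_pair hne12, htot] at h
    rw [hwS]
    linarith
  have hmax : ∀ i : Fin k, i ≤ i2 := by
    intro i
    rw [Fin.le_def, hv2]
    have := i.isLt
    omega
  have hbig : 2 / (k : ℝ) ≤ ∑ v ∈ Vc i2, w v := by
    have hsum_le : (2:ℝ) ≤ k * ∑ v ∈ Vc i2, w v := by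
      calc (2:ℝ) = ∑ i : Fin k, ∑ v ∈ Vc i, w v := htot.symm
        _ ≤ ∑ _i : Fin k, ∑ v ∈ Vc i2, w v :=
            Finset.sum_le_sum fun i _ => hmono i i2 (hmax i)
        _ = k * ∑ v ∈ Vc i2, w v := by
            rw [Finset.sum_const, Finset.card_univ, Fintype.card_fin, nsmul_eq_mul]
    rw [div_le_iff₀ hkR]
    linarith
  have hOPT1 : 1 ≤ OPT G w := by
    apply le_csInf
    · exact ⟨∑ v ∈ Finset.univ, w v, Finset.univ,
        fun u v _ => Or.inl (Finset.mem_univ u), rfl⟩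
    · rintro t ⟨C, hC, rfl⟩
      exact vc_weight_ge_one G w y hy hwsum C hC
  have hbdd : BddBelow {t : ℝ | ∃ C : Finset V, IsVC (Gdel G ↑S) C ∧ t = ∑ v ∈ C, w v} := by
    refine ⟨0, ?_⟩
    rintro t ⟨C, hC, rfl⟩
    exact Finset.sum_nonneg fun v _ => hw0 v
  have hOPTdel : OPT (Gdel G ↑S) w ≤ ∑ v ∈ Vc i1, w v :=
    csInf_le hbdd ⟨Vc i1, hVC1, rfl⟩
  refine ⟨hcol, ?_⟩
  have h2k' : (0:ℝ) ≤ 2 - 2 / k := by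
    rw [sub_nonneg, div_le_iff₀ hkR]
    linarith
  calc ∑ v ∈ S, w v + OPT (Gdel G ↑S) w
      ≤ ∑ v ∈ S, w v + ∑ v ∈ Vc i1, w v := by linarith
    _ = 2 - ∑ v ∈ Vc i2, w v := by linarith
    _ ≤ 2 - 2 / k := by linarith
    _ = (2 - 2 / k) * 1 := by ring
    _ ≤ (2 - 2 / k) * OPT G w := mul_le_mul_of_nonneg_left hOPT1 h2k'
end

section
/- Let G = (V,E) be a finite non-bipartite simple graph of odd girth 2ρ−1 (ρ ≥ 2 an integer) and let v_p ∈ V be such that G∖v_p is bipartite. Then the fractional chromatic number of G equals 2 + 1/(ρ−1), i.e. χ^f(G) = (2ρ−1)/(ρ−1). -/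
/-!
Write `ρ = k + 1` and let `C` be the odd cycle `ℤ/(2k+1)`. The fractional chromatic number is
monotone under graph homomorphisms (pull a fractional colouring back along the map), and `G` and
`C` map to each other. A shortest odd cycle of `G` is an image of `C`. Conversely, send `u` to
`±min(d(v_p, u), k)`, the sign being the parity of that distance plus the side of `u` in a
2-colouring of `G ∖ v_p`: an edge either increases the truncated distance by one, or joins two
vertices at distance `k` on opposite sides (`k` and `-k = k + 1` are adjacent in `C`), because two
adjacent vertices at equal distance `< k` would close an odd walk shorter than `2k + 1`.
Finally `χ_f(C) = (2k+1)/k`: the `2k + 1` arcs `{j, j + 2, …, j + 2k - 2}` are independent and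
cover every vertex `k` times, while every independent set of `C` has at most `k` vertices.
-/

open Finset

open Finset SimpleGraph

section FractionalColoring

theorem IsIndep.comap {V W : Type*} [Fintype V] [DecidableEq W] {G : SimpleGraph V}
    {H : SimpleGraph W} (f : G →g H) {I : Finset W} (hI : IsIndep H I) :
    IsIndep G {v | f v ∈ I} := by
  intro u hu v hv huv
  exact hI (mem_filter.mp hu).2 (mem_filter.mp hv).2 (f.map_rel huv)

variable {V : Type*} [Fintype V] [DecidableEq V] {G : SimpleGraph V}

structure IsFracColoring (G : SimpleGraph V) (y : Finset V → ℝ) : Prop where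
  nonneg : ∀ I, 0 ≤ y I
  eq_zero_of_not_isIndep : ∀ I, ¬ IsIndep G I → y I = 0
  one_le_sum : ∀ v, 1 ≤ ∑ I, if v ∈ I then y I else 0

/-- Collapses a weighted family of vertex sets, possibly with repetitions, to a weight on sets. -/
def familyWeight {α : Type*} [Fintype α] (g : α → Finset V) (w : α → ℝ) (I : Finset V) :
    ℝ :=
  ∑ a with g a = I, w a

section familyWeight

variable {α : Type*} [Fintype α] (g : α → Finset V) (w : α → ℝ)

theorem sum_familyWeight : ∑ I, familyWeight g w I = ∑ a, w a :=
  sum_fiberwise univ g w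

theorem sum_familyWeight_of_mem (v : V) :
    ∑ I, (if v ∈ I then familyWeight g w I else 0) = ∑ a, if v ∈ g a then w a else 0 := by
  rw [← sum_fiberwise univ g]
  refine sum_congr rfl fun I _ => ?_
  split_ifs with hv
  · exact sum_congr rfl fun a ha => by rw [(mem_filter.mp ha).2, if_pos hv]
  · exact (sum_eq_zero fun a ha => by rw [(mem_filter.mp ha).2, if_neg hv]).symm

theorem isFracColoring_familyWeight (hw : ∀ a, 0 ≤ w a)
    (hind : ∀ a, w a ≠ 0 → IsIndep G (g a))
    (hcov : ∀ v, 1 ≤ ∑ a, if v ∈ g a then w a else 0) :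
    IsFracColoring G (familyWeight g w) where
  nonneg I := sum_nonneg fun a _ => hw a
  eq_zero_of_not_isIndep I hI := sum_eq_zero fun a ha => by
    by_contra h
    exact hI ((mem_filter.mp ha).2 ▸ hind a h)
  one_le_sum v := (sum_familyWeight_of_mem g w v).symm ▸ hcov v

end familyWeight

theorem IsFracColoring.fracChrom_le {y : Finset V → ℝ} (hy : IsFracColoring G y) :
    fracChrom G ≤ ∑ I, y I := by
  refine csInf_le ⟨0, ?_⟩ ⟨y, hy.1, hy.2, hy.3, rfl⟩
  rintro _ ⟨z, hz, -, -, rfl⟩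
  exact sum_nonneg fun I _ => hz I

theorem fracChrom_le_of_family {α : Type*} [Fintype α] (g : α → Finset V) (w : α → ℝ)
    (hw : ∀ a, 0 ≤ w a) (hind : ∀ a, w a ≠ 0 → IsIndep G (g a))
    (hcov : ∀ v, 1 ≤ ∑ a, if v ∈ g a then w a else 0) :
    fracChrom G ≤ ∑ a, w a :=
  sum_familyWeight g w ▸ (isFracColoring_familyWeight g w hw hind hcov).fracChrom_le

theorem le_fracChrom {t : ℝ} (h : ∀ y, IsFracColoring G y → t ≤ ∑ I, y I) :
    t ≤ fracChrom G := by
  have hsingle := isFracColoring_familyWeight (G := G) (fun v => {v}) 1 (fun _ => zero_le_one)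
    (fun v _ u hu w hw => by rw [mem_singleton.mp hu, mem_singleton.mp hw]; exact G.irrefl)
    (fun v => by simp)
  refine le_csInf ⟨_, _, hsingle.1, hsingle.2, hsingle.3, rfl⟩ ?_
  rintro _ ⟨y, h0, h1, h2, rfl⟩
  exact h y ⟨h0, h1, h2⟩

theorem fracChrom_le_of_hom {W : Type*} [Fintype W] [DecidableEq W] {H : SimpleGraph W}
    (f : G →g H) : fracChrom G ≤ fracChrom H :=
  le_fracChrom fun y hy => fracChrom_le_of_family (fun I => {v | f v ∈ I}) y hy.nonneg
    (fun I hI => (of_not_not fun hI' => hI (hy.eq_zero_of_not_isIndep I hI')).comap f)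
    (fun v => by simpa using hy.one_le_sum (f v))

theorem fracChrom_le_div_of_cover {ι : Type*} [Fintype ι] (J : ι → Finset V)
    (hJ : ∀ i, IsIndep G (J i)) {m : ℕ} (hm : 0 < m) (hcov : ∀ v, m ≤ #{i | v ∈ J i}) :
    fracChrom G ≤ Fintype.card ι / m := by
  have hcov' (v : V) : 1 ≤ ∑ i, if v ∈ J i then (1 / m : ℝ) else 0 := by
    rw [← sum_filter, sum_const, nsmul_eq_mul, mul_one_div, one_le_div (by positivity)]
    exact_mod_cast hcov v
  simpa [div_eq_mul_inv] using
    fracChrom_le_of_family J (fun _ => 1 / m) (fun _ => by positivity) (fun i _ => hJ i) hcov'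

theorem IsFracColoring.card_le_mul_sum {y : Finset V → ℝ} (hy : IsFracColoring G y) {α : ℕ}
    (hα : ∀ I, IsIndep G I → #I ≤ α) : (Fintype.card V : ℝ) ≤ α * ∑ I, y I := by
  calc (Fintype.card V : ℝ) = ∑ _v : V, 1 := by simp
    _ ≤ ∑ v, ∑ I, if v ∈ I then y I else 0 := sum_le_sum fun v _ => hy.one_le_sum v
    _ = ∑ I, #I * y I := by
      rw [sum_comm]
      refine sum_congr rfl fun I _ => ?_
      rw [← sum_filter, sum_const, nsmul_eq_mul, filter_mem_eq_inter, univ_inter]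
    _ ≤ ∑ I, α * y I := sum_le_sum fun I _ => by
      by_cases hI : IsIndep G I
      · exact mul_le_mul_of_nonneg_right (by exact_mod_cast hα I hI) (hy.nonneg I)
      · simp [hy.eq_zero_of_not_isIndep I hI]
    _ = α * ∑ I, y I := (mul_sum ..).symm

theorem div_le_fracChrom {α : ℕ} (hα0 : 0 < α) (hα : ∀ I, IsIndep G I → #I ≤ α) :
    Fintype.card V / α ≤ fracChrom G :=
  le_fracChrom fun y hy => by
    rw [div_le_iff₀' (by positivity)]
    exact hy.card_le_mul_sum hα

end FractionalColoring

section OddCycle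

theorem circulantGraph_one_adj_of_sub_eq_neg_one_pow {n : ℕ} [Fact (1 < n)] {x y : ZMod n}
    {m : ℕ} (h : y - x = (-1) ^ m) : (circulantGraph ({1} : Set (ZMod n))).Adj x y := by
  refine ⟨fun hxy => ?_, ?_⟩
  · rw [hxy, sub_self] at h
    rcases neg_one_pow_eq_or (ZMod n) m with h' | h' <;> rw [h'] at h
    · exact zero_ne_one h
    · exact zero_ne_one (neg_eq_zero.mp h.symm).symm
  · rcases neg_one_pow_eq_or (ZMod n) m with h' | h' <;> rw [h'] at h
    · exact Or.inr h
    · exact Or.inl (Set.mem_singleton_iff.mpr (by rw [← neg_sub, h, neg_neg]))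

theorem IsIndep.two_mul_card_le {n : ℕ} [Fact (1 < n)] {I : Finset (ZMod n)}
    (hI : IsIndep (circulantGraph ({1} : Set (ZMod n))) I) : 2 * #I ≤ n := by
  have hdisj : Disjoint I (I.map (addRightEmbedding 1)) := by
    refine disjoint_left.mpr fun x hx hx' => ?_
    obtain ⟨u, hu, rfl⟩ := mem_map.mp hx'
    exact hI hu hx (circulantGraph_one_adj_of_sub_eq_neg_one_pow (m := 0) (by simp))
  calc 2 * #I = #(I ∪ I.map (addRightEmbedding 1)) := by
        rw [card_union_of_disjoint hdisj, card_map]; ring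
    _ ≤ Fintype.card (ZMod n) := card_le_univ _
    _ = n := ZMod.card n

theorem ZMod.natCast_inj_of_lt {n a b : ℕ} (ha : a < n) (hb : b < n)
    (h : (a : ZMod n) = b) : a = b := by
  rwa [ZMod.natCast_eq_natCast_iff', Nat.mod_eq_of_lt ha, Nat.mod_eq_of_lt hb] at h

variable {k : ℕ}

def evenArc (k : ℕ) (j : ZMod (2 * k + 1)) : Finset (ZMod (2 * k + 1)) :=
  (range k).image fun t => j + (2 * t : ℕ)

theorem isIndep_evenArc (j : ZMod (2 * k + 1)) :
    IsIndep (circulantGraph ({1} : Set (ZMod (2 * k + 1)))) (evenArc k j) := by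
  simp only [IsIndep, evenArc, mem_image, mem_range]
  rintro _ ⟨t, ht, rfl⟩ _ ⟨s, hs, rfl⟩ ⟨-, hadj⟩
  simp only [Set.mem_singleton_iff, add_sub_add_left_eq_sub, sub_eq_iff_eq_add] at hadj
  rcases hadj with h | h
  · have := ZMod.natCast_inj_of_lt (by omega) (by omega) (h.trans (by push_cast; ring) :
      ((2 * t : ℕ) : ZMod (2 * k + 1)) = (2 * s + 1 : ℕ))
    omega
  · have := ZMod.natCast_inj_of_lt (by omega) (by omega) (h.trans (by push_cast; ring) :
      ((2 * s : ℕ) : ZMod (2 * k + 1)) = (2 * t + 1 : ℕ))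
    omega

theorem card_filter_mem_evenArc (v : ZMod (2 * k + 1)) : #{j | v ∈ evenArc k j} = k := by
  have : ({j | v ∈ evenArc k j} : Finset _) = (range k).image fun t => v - (2 * t : ℕ) := by
    ext j
    simp only [evenArc, mem_filter, mem_univ, true_and, mem_image, mem_range]
    exact exists_congr fun t => and_congr_right fun _ => by
      constructor <;> rintro rfl <;> ring
  rw [this, card_image_of_injOn, card_range]
  intro t ht s hs h
  have := ZMod.natCast_inj_of_lt (n := 2 * k + 1) (by simp at ht; omega) (by simp at hs; omega)
    (sub_right_injective h)
  omega

theorem fracChrom_circulantGraph_odd (hk : k ≠ 0) :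
    fracChrom (circulantGraph ({1} : Set (ZMod (2 * k + 1)))) = (2 * k + 1) / k := by
  have : Fact (1 < 2 * k + 1) := ⟨by omega⟩
  apply le_antisymm
  · simpa using fracChrom_le_div_of_cover (evenArc k) isIndep_evenArc (Nat.pos_of_ne_zero hk)
      fun v => (card_filter_mem_evenArc v).ge
  · simpa using div_le_fracChrom (G := circulantGraph ({1} : Set (ZMod (2 * k + 1))))
      (Nat.pos_of_ne_zero hk) fun I hI => by
      have := hI.two_mul_card_le
      omega

end OddCycle

section OddClosedWalks

variable {V : Type*} {G : SimpleGraph V}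

theorem SimpleGraph.Walk.exists_closed_subwalk_of_not_nodup [DecidableEq V] {u v : V}
    (p : G.Walk u v) (hp : ¬ p.support.Nodup) :
    ∃ (x : V) (q : G.Walk u x) (c : G.Walk x x) (r : G.Walk x v),
      c.length ≠ 0 ∧ q.length + c.length + r.length = p.length := by
  induction p with
  | nil => simp at hp
  | @cons u y v h p ih =>
    by_cases hnd : p.support.Nodup
    · have hu : u ∈ p.support := by simpa [hnd] using hp
      refine ⟨u, nil, cons h (p.takeUntil u hu), p.dropUntil u hu, by simp, ?_⟩
      have := congrArg length (p.take_spec hu)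
      simp only [length_append] at this
      simp only [length_nil, length_cons]
      omega
    · obtain ⟨x, q, c, r, hc, hlen⟩ := ih hnd
      exact ⟨x, cons h q, c, r, hc, by simp only [length_cons]; omega⟩

theorem SimpleGraph.Walk.exists_isCycle_odd_length_le_s17 {v : V} (w : G.Walk v v)
    (hw : Odd w.length) :
    ∃ (u : V) (c : G.Walk u u), c.IsCycle ∧ Odd c.length ∧ c.length ≤ w.length := by
  classical
  induction hn : w.length using Nat.strong_induction_on generalizing v with
  | _ n ih =>
  cases w with
  | nil => simp at hw
  | @cons _ y _ h p =>
    by_cases hp : p.support.Nodup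
    · have hp0 : p.length ≠ 0 := fun h0 => h.ne (p.eq_of_length_eq_zero h0).symm
      refine ⟨v, cons h p, ?_, hw, hn.le⟩
      refine isCycle_iff_isPath_tail_and_le_length.mpr ⟨by simpa using IsPath.mk' hp, ?_⟩
      rw [length_cons, Nat.odd_add_one, Nat.not_odd_iff_even] at hw
      obtain ⟨m, hm⟩ := hw
      rw [length_cons]
      omega
    · obtain ⟨x, q, c, r, hc, hlen⟩ := p.exists_closed_subwalk_of_not_nodup hp
      have hsum : c.length + (r.append (cons h q)).length = n := by
        simp only [length_append, length_cons] at hn ⊢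
        omega
      rcases Nat.even_or_odd c.length with hc' | hc'
      · have hodd : Odd (r.append (cons h q)).length := by
          rw [hn, ← hsum] at hw
          exact (Nat.odd_add'.mp hw).mpr hc'
        obtain ⟨u, c', hcyc, hodd', hle⟩ := ih _ (by omega) _ hodd rfl
        exact ⟨u, c', hcyc, hodd', by omega⟩
      · obtain ⟨u, c', hcyc, hodd', hle⟩ := ih _ (by simp at hsum; omega) c hc' rfl
        exact ⟨u, c', hcyc, hodd', by omega⟩

theorem HasOddGirth.le_length_of_odd {n : ℕ} (hG : HasOddGirth G n) {v : V} (w : G.Walk v v)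
    (hw : Odd w.length) : n ≤ w.length :=
  let ⟨_, c, hc, hodd, hle⟩ := w.exists_isCycle_odd_length_le_s17 hw
  (hG.2.2 _ c hc hodd).trans hle

end OddClosedWalks

section HomToOddCycle

variable {V : Type*} {G : SimpleGraph V}

open Classical in
/-- `G.dist` is a junk `0` between unreachable vertices; these are put at distance `k` instead. -/
noncomputable def truncDist (G : SimpleGraph V) (a : V) (k : ℕ) (u : V) : ℕ :=
  if G.Reachable a u then min (G.dist a u) k else k

variable {a u w : V} {k : ℕ}

theorem truncDist_eq_zero_iff (hk : k ≠ 0) : truncDist G a k u = 0 ↔ u = a := by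
  unfold truncDist
  split_ifs with hr
  · rw [Nat.min_eq_zero_iff, hr.dist_eq_zero_iff, eq_comm]
    tauto
  · exact iff_of_false hk fun hu => hr (hu ▸ Reachable.refl u)

theorem SimpleGraph.Adj.truncDist_le_succ (h : G.Adj u w) :
    truncDist G a k w ≤ truncDist G a k u + 1 := by
  unfold truncDist
  by_cases hr : G.Reachable a u
  · obtain ⟨p, hp⟩ := hr.exists_walk_length_eq_dist
    have := dist_le (p.concat h)
    rw [if_pos hr, if_pos (hr.trans h.reachable), Walk.length_concat, hp] at *
    omega
  · split_ifs <;> omega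

theorem SimpleGraph.Adj.truncDist_eq_of_eq
    (hodd : ∀ {v : V} (c : G.Walk v v), Odd c.length → 2 * k + 1 ≤ c.length) (h : G.Adj u w)
    (he : truncDist G a k u = truncDist G a k w) : truncDist G a k u = k := by
  unfold truncDist at *
  by_cases hu : G.Reachable a u
  · have hw := hu.trans h.reachable
    rw [if_pos hu, if_pos hw] at *
    by_contra hlt
    obtain ⟨p, hp⟩ := hu.exists_walk_length_eq_dist
    obtain ⟨q, hq⟩ := hw.exists_walk_length_eq_dist
    have := hodd ((p.concat h).append q.reverse) (by
      simp only [Walk.length_append, Walk.length_concat, Walk.length_reverse, hp, hq]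
      exact ⟨G.dist a u, by omega⟩)
    simp only [Walk.length_append, Walk.length_concat, Walk.length_reverse, hp, hq] at this
    omega
  · rw [if_neg hu]

def foldToCycle (k : ℕ) (d c : V → ℕ) (u : V) : ZMod (2 * k + 1) :=
  (-1) ^ (c u + d u) * d u

theorem foldToCycle_sub_eq_neg_one_pow {d c : V → ℕ} (hd0 : ∀ u, d u = 0 ↔ u = a)
    (hd1 : ∀ ⦃u w⦄, G.Adj u w → d w ≤ d u + 1)
    (hd2 : ∀ ⦃u w⦄, G.Adj u w → d u = d w → d u = k)
    (hc : ∀ ⦃u w⦄, G.Adj u w → u ≠ a → w ≠ a → Odd (c u + c w))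
    (h : G.Adj u w) (hle : d u ≤ d w) :
    ∃ m : ℕ, foldToCycle k d c w - foldToCycle k d c u = (-1) ^ m := by
  have hwa (hw : w = a) : u = a := by
    have := (hd0 w).mpr hw
    exact (hd0 u).mp (by omega)
  rcases (by have := hd1 h; omega : d w = d u + 1 ∨ d w = d u) with hdw | hdw
  · by_cases hua : u = a
    · refine ⟨c w + 1, ?_⟩
      simp [foldToCycle, hdw, (hd0 u).mpr hua]
    · have hcw := hc h hua (mt hwa hua)
      refine ⟨c u + d u, ?_⟩
      rw [foldToCycle, foldToCycle, hdw, neg_one_pow_congr (n := c u + d u)]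
      · push_cast; ring
      · rw [Nat.odd_iff] at hcw
        simp only [Nat.even_iff]
        omega
  · have hua : u ≠ a := fun hua =>
      h.ne (hua.trans ((hd0 w).mp (hdw.trans ((hd0 u).mpr hua))).symm)
    have hcw := hc h hua (fun hw => hua (hwa hw))
    have hk : d u = k := hd2 h hdw.symm
    have hflip : (-1 : ZMod (2 * k + 1)) ^ (c w + k) = -(-1) ^ (c u + k) := by
      rw [← neg_one_mul (_ ^ _), ← pow_succ', neg_one_pow_congr]
      rw [Nat.odd_iff] at hcw
      simp only [Nat.even_iff]
      omega
    have hzero : (2 * k + 1 : ZMod (2 * k + 1)) = 0 := by exact_mod_cast ZMod.natCast_self _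
    refine ⟨c u + k, ?_⟩
    rw [foldToCycle, foldToCycle, hdw, hk, hflip]
    linear_combination (-(-1 : ZMod (2 * k + 1)) ^ (c u + k)) * hzero

theorem exists_hom_oddCycle_of_colorable_deleteVertex (hk : k ≠ 0)
    (hodd : ∀ {v : V} (c : G.Walk v v), Odd c.length → 2 * k + 1 ≤ c.length)
    (hbip : (Gdel G {a}).Colorable 2) :
    Nonempty (G →g circulantGraph ({1} : Set (ZMod (2 * k + 1)))) := by
  obtain ⟨C⟩ := hbip
  have : Fact (1 < 2 * k + 1) := ⟨by omega⟩
  have hc ⦃u w : V⦄ (h : G.Adj u w) (hu : u ≠ a) (hw : w ≠ a) : Odd ((C u : ℕ) + C w) := by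
    have hdel : (Gdel G {a}).Adj u w := ⟨h.ne, Or.inl ⟨h, hu, hw⟩⟩
    have hne := Fin.val_ne_of_ne (C.valid hdel)
    have := (C u).isLt
    have := (C w).isLt
    rw [Nat.odd_iff]
    omega
  have hfold ⦃u w : V⦄ (h : G.Adj u w) (hle : truncDist G a k u ≤ truncDist G a k w) :=
    foldToCycle_sub_eq_neg_one_pow (fun _ => truncDist_eq_zero_iff hk)
      (fun _ _ h => h.truncDist_le_succ) (fun _ _ h => h.truncDist_eq_of_eq hodd) hc h hle
  refine ⟨⟨foldToCycle k (truncDist G a k) (fun u => C u), fun {u w} h => ?_⟩⟩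
  rcases le_total (truncDist G a k u) (truncDist G a k w) with hle | hle
  · obtain ⟨m, hm⟩ := hfold h hle
    exact circulantGraph_one_adj_of_sub_eq_neg_one_pow hm
  · obtain ⟨m, hm⟩ := hfold h.symm hle
    exact (circulantGraph_one_adj_of_sub_eq_neg_one_pow hm).symm

end HomToOddCycle

theorem fracChrom_one_vertex_bipartize_general {V : Type*} [Fintype V] [DecidableEq V]
    (G : SimpleGraph V)
    (ρ : ℕ) (hog : HasOddGirth G (2 * ρ - 1))
    (v_p : V) (hbip : (Gdel G {v_p}).Colorable 2) :
    fracChrom G = 2 + 1 / ((ρ : ℝ) - 1) := by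
  obtain ⟨v, c, hc, hlen⟩ := hog.2.1
  obtain ⟨k, rfl⟩ : ∃ k, ρ = k + 1 := ⟨ρ - 1, by have := hc.three_le_length; omega⟩
  have hk : k ≠ 0 := by have := hc.three_le_length; omega
  rw [show 2 * (k + 1) - 1 = 2 * k + 1 by omega] at hog hlen
  obtain ⟨toCycle⟩ := exists_hom_oddCycle_of_colorable_deleteVertex hk hog.le_length_of_odd hbip
  obtain ⟨ofCycle⟩ := (cycleGraph_isContained_iff (by omega)).mpr ⟨v, c, hc, hlen⟩
  have hcycle : fracChrom G = fracChrom (circulantGraph ({1} : Set (ZMod (2 * k + 1)))) :=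
    -- `ZMod (2k+1)` is `Fin (2k+1)` by definition, with the same addition.
    le_antisymm (fracChrom_le_of_hom toCycle) <| fracChrom_le_of_hom <|
      ofCycle.toHom.comp (Hom.ofLE (cycleGraph_eq_circulantGraph (2 * k)).ge)
  have hk' : (k : ℝ) ≠ 0 := by exact_mod_cast hk
  rw [hcycle, fracChrom_circulantGraph_odd hk, Nat.cast_succ, add_sub_cancel_right]
  field_simp

/-- if removing one vertex bipartizes `G` and `G` has odd girth `2ρ-1`,
then the fractional chromatic number of `G` equals `2 + 1/(ρ-1)`. -/
theorem fracChrom_one_vertex_bipartize {V : Type*} [Fintype V] [DecidableEq V]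
    (G : SimpleGraph V) (hnb : ¬ G.Colorable 2)
    (ρ : ℕ) (hρ : 2 ≤ ρ) (hog : HasOddGirth G (2 * ρ - 1))
    (v_p : V) (hbip : (Gdel G {v_p}).Colorable 2) :
    fracChrom G = 2 + 1 / ((ρ : ℝ) - 1) :=
  fracChrom_one_vertex_bipartize_general G ρ hog v_p hbip
end
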